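/- arXiv:2409.03436 — 4 statements merged into one kernel-verified Lean document; each statement's English description precedes it below -/
import Mathlib

section
/- Let a, b, A > 0 and c ≥ 0 be real numbers. The function g(z) = ln(1 + a z) / (b z + A + c · ln(1 + a z)) on the domain z > 0 attains its maximum at the unique point z* = (e^u − 1)/a, where u is the unique positive real number satisfying (u − 1)e^u = aA/b − 1; that is, g(z*) ≥ g(z) for all z > 0, with equality only at z = z*. -/
/-!
Substituting `1 + a z = e^w` turns `g` into `w / ((b/a)(e^w + K) + c w)` with `K = aA/b - 1`.
With `K = (u - 1) e^u`, the inequality `g ≤ g(z*)` becomes `w e^u ≤ e^w + (u - 1) e^u`, i.e.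
`e^w` lies above its tangent line at `u`, strictly for `w ≠ u`.
-/

open Real

/-- The generic energy-efficiency objective `g(z) = ln(1 + a z) / (b z + A + c ln(1 + a z))`. -/
noncomputable def g0 (a b A c z : ℝ) : ℝ :=
  Real.log (1 + a * z) / (b * z + A + c * Real.log (1 + a * z))

lemma g0_exp_sub_one_div {a b : ℝ} (ha : a ≠ 0) (hb : b ≠ 0) (A c w : ℝ) :
    g0 a b A c ((exp w - 1) / a) = w / (b / a * (exp w + (a * A / b - 1)) + c * w) := by
  have h : 1 + a * ((exp w - 1) / a) = exp w := by field_simp; ring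
  rw [g0, h, log_exp]
  congr 1
  field_simp
  ring

lemma exp_mul_sub_add_one_lt_exp {u w : ℝ} (h : w ≠ u) : exp u * (w - u + 1) < exp w := by
  calc exp u * (w - u + 1) < exp u * exp (w - u) :=
        mul_lt_mul_of_pos_left (add_one_lt_exp (sub_ne_zero.mpr h)) (exp_pos u)
    _ = exp w := by rw [← exp_add, add_sub_cancel]

lemma div_exp_add_lt {β c u w : ℝ} (hβ : 0 < β) (hc : 0 ≤ c) (hu : 0 < u) (hw : 0 < w)
    (hwu : w ≠ u) :
    w / (β * (exp w + (u - 1) * exp u) + c * w) <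
      u / (β * (exp u + (u - 1) * exp u) + c * u) := by
  have htangent : w * exp u < exp w + (u - 1) * exp u := by
    linarith [exp_mul_sub_add_one_lt_exp hwu]
  have hmax : β * (exp u + (u - 1) * exp u) + c * u = u * (β * exp u + c) := by ring
  have hden : 0 < β * (exp w + (u - 1) * exp u) + c * w :=
    add_pos_of_pos_of_nonneg (mul_pos hβ (by linarith [mul_pos hw (exp_pos u)]))
      (mul_nonneg hc hw.le)
  rw [hmax, div_mul_cancel_left₀ hu.ne', ← one_div, div_lt_div_iff₀ hden (by positivity)]
  linarith [mul_lt_mul_of_pos_left htangent hβ]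

theorem stmt_0_general (a b A c u : ℝ) (ha : 0 < a) (hb : 0 < b) (hc : 0 ≤ c)
    (hu : 0 < u) (hue : (u - 1) * Real.exp u = a * A / b - 1) :
    ∀ z : ℝ, 0 < z →
      g0 a b A c z ≤ g0 a b A c ((Real.exp u - 1) / a) ∧
      (g0 a b A c z = g0 a b A c ((Real.exp u - 1) / a) → z = (Real.exp u - 1) / a) := by
  intro z hz
  have h1az : 0 < 1 + a * z := by positivity
  obtain ⟨w, hw, rfl⟩ : ∃ w > 0, z = (exp w - 1) / a :=
    ⟨log (1 + a * z), log_pos (by linarith [mul_pos ha hz]), by rw [exp_log h1az]; field_simp; ring⟩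
  rcases eq_or_ne w u with rfl | hwu
  · simp
  rw [g0_exp_sub_one_div ha.ne' hb.ne', g0_exp_sub_one_div ha.ne' hb.ne', ← hue]
  have hlt := div_exp_add_lt (div_pos hb ha) hc hu hw hwu
  exact ⟨hlt.le, fun h => absurd h hlt.ne⟩

/-- For `a, b, A > 0` and `c ≥ 0`, the function `g` on `z > 0` attains its maximum at the
unique point `z* = (e^u - 1)/a`, where `u > 0` satisfies `(u - 1) e^u = aA/b - 1`. -/
theorem stmt_0 (a b A c u : ℝ) (ha : 0 < a) (hb : 0 < b) (hA : 0 < A) (hc : 0 ≤ c)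
    (hu : 0 < u) (hue : (u - 1) * Real.exp u = a * A / b - 1) :
    ∀ z : ℝ, 0 < z →
      g0 a b A c z ≤ g0 a b A c ((Real.exp u - 1) / a) ∧
      (g0 a b A c z = g0 a b A c ((Real.exp u - 1) / a) → z = (Real.exp u - 1) / a) :=
  stmt_0_general a b A c u ha hb hc hu hue
end

section
/- Let β, N₀, κ, ν, M > 0 and η ≥ 0 be real numbers. The function g(z) = log₂(1 + (Mβ/N₀) z) / (z/κ + νM + η·log₂(1 + (Mβ/N₀) z)) on the domain z > 0 attains its maximum at the unique point z* = N₀(e^u − 1)/(Mβ), where u is the unique positive real number satisfying (u − 1)e^u = κ M² β ν / N₀ − 1. -/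
/-!
Substituting `t = log (1 + a z)` with `a = M β / N₀` turns the efficiency into
`t / (log 2 · (e^t + (u - 1) e^u) / (a κ) + η t)`, using the defining equation of `u` to write
`a κ ν M = (u - 1) e^u + 1`. Comparing with the value `u / (log 2 · u e^u / (a κ) + η u)`
at `t = u` reduces to `t e^u < e^t + (u - 1) e^u` for `t ≠ u`, which is the strict
tangent-line inequality for `exp` at `u`.
-/

open Real

noncomputable def g2 (β N₀ κ ν η M z : ℝ) : ℝ :=
  Real.logb 2 (1 + (M * β / N₀) * z) /
    (z / κ + ν * M + η * Real.logb 2 (1 + (M * β / N₀) * z))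

theorem Real.exp_add_sub_mul_exp_lt_exp {t u : ℝ} (h : t ≠ u) :
    exp u + (t - u) * exp u < exp t :=
  calc exp u + (t - u) * exp u = (t - u + 1) * exp u := by ring
    _ < exp (t - u) * exp u :=
      mul_lt_mul_of_pos_right (add_one_lt_exp (sub_ne_zero.mpr h)) (exp_pos u)
    _ = exp t := by rw [← exp_add, sub_add_cancel]

theorem div_add_mul_self_lt_div_add_mul_self {x y D E η : ℝ} (hx : 0 ≤ x) (hy : 0 < y)
    (hE : 0 < E) (hη : 0 ≤ η) (h : x * E < y * D) :
    x / (D + η * x) < y / (E + η * y) := by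
  have hD : 0 < D := pos_of_mul_pos_right ((mul_nonneg hx hE.le).trans_lt h) hy.le
  rw [div_lt_div_iff₀ (by positivity) (by positivity)]
  linear_combination h

theorem logb_div_lt_logb_div_of_ne {a κ c η u z zs : ℝ} (ha : 0 < a) (hκ : 0 < κ)
    (hη : 0 ≤ η) (hu : 0 < u) (hc : a * κ * c = (u - 1) * exp u + 1)
    (hzs : a * zs = exp u - 1) (hz : 0 ≤ z) (hne : z ≠ zs) :
    logb 2 (1 + a * z) / (z / κ + c + η * logb 2 (1 + a * z)) <
      logb 2 (1 + a * zs) / (zs / κ + c + η * logb 2 (1 + a * zs)) := by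
  set t := log (1 + a * z)
  have hexp : exp t = 1 + a * z := exp_log (by positivity)
  have hexp_u : 1 + a * zs = exp u := by rw [hzs]; ring
  have htu : t ≠ u := fun h ↦ hne <| mul_left_cancel₀ ha.ne' <| by
    rw [hzs, ← h, hexp]; ring
  have hE : zs / κ + c = u * exp u / (a * κ) := by
    field_simp
    linear_combination hzs + hc
  have hD : z / κ + c = (exp t + (u - 1) * exp u) / (a * κ) := by
    field_simp
    linear_combination hc - hexp
  have key : t * (zs / κ + c) < u * (z / κ + c) := by
    rw [hE, hD, mul_div_assoc', mul_div_assoc']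
    refine div_lt_div_of_pos_right ?_ (by positivity)
    linear_combination mul_lt_mul_of_pos_left (exp_add_sub_mul_exp_lt_exp htu) hu
  rw [hexp_u, logb, logb, log_exp]
  refine div_add_mul_self_lt_div_add_mul_self ?_ (by positivity) (hE ▸ by positivity) hη ?_
  · exact div_nonneg (log_nonneg (le_add_of_nonneg_right (by positivity)))
      (log_nonneg one_le_two)
  · rw [div_mul_eq_mul_div, div_mul_eq_mul_div]
    exact div_lt_div_of_pos_right key (log_pos one_lt_two)

theorem stmt_2_general (β N₀ κ ν M η u : ℝ) (hβ : 0 < β) (hN : 0 < N₀) (hκ : 0 < κ)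
    (hM : 0 < M) (hη : 0 ≤ η) (hu : 0 < u)
    (hue : (u - 1) * Real.exp u = κ * M ^ 2 * β * ν / N₀ - 1) :
    ∀ z : ℝ, 0 < z →
      g2 β N₀ κ ν η M z ≤ g2 β N₀ κ ν η M (N₀ * (Real.exp u - 1) / (M * β)) ∧
      (g2 β N₀ κ ν η M z = g2 β N₀ κ ν η M (N₀ * (Real.exp u - 1) / (M * β)) →
        z = N₀ * (Real.exp u - 1) / (M * β)) := by
  intro z hz
  rcases eq_or_ne z (N₀ * (exp u - 1) / (M * β)) with rfl | hne
  · exact ⟨le_rfl, fun _ ↦ rfl⟩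
  have ha : 0 < M * β / N₀ := by positivity
  have hlt : g2 β N₀ κ ν η M z < g2 β N₀ κ ν η M (N₀ * (exp u - 1) / (M * β)) := by
    refine logb_div_lt_logb_div_of_ne ha hκ hη hu ?_ ?_ hz.le hne
    · rw [hue]; field_simp; ring
    · field_simp
  exact ⟨hlt.le, fun h ↦ absurd h hlt.ne⟩

/-- Theorem 1 of the paper: `g2` on `z > 0` attains its maximum at the unique point
`z* = N₀ (e^u - 1)/(M β)`, where `u > 0` satisfies `(u - 1) e^u = κ M² β ν / N₀ - 1`. -/
theorem stmt_2 (β N₀ κ ν M η u : ℝ) (hβ : 0 < β) (hN : 0 < N₀) (hκ : 0 < κ)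
    (hν : 0 < ν) (hM : 0 < M) (hη : 0 ≤ η) (hu : 0 < u)
    (hue : (u - 1) * Real.exp u = κ * M ^ 2 * β * ν / N₀ - 1) :
    ∀ z : ℝ, 0 < z →
      g2 β N₀ κ ν η M z ≤ g2 β N₀ κ ν η M (N₀ * (Real.exp u - 1) / (M * β)) ∧
      (g2 β N₀ κ ν η M z = g2 β N₀ κ ν η M (N₀ * (Real.exp u - 1) / (M * β)) →
        z = N₀ * (Real.exp u - 1) / (M * β)) :=
  stmt_2_general β N₀ κ ν M η u hβ hN hκ hM hη hu hue
end

section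
/- Let β, N₀, κ, P, M, ν > 0 and μ, D₀ ≥ 0 be real numbers, and set K = κμ + D₀Mκ + P. Then there exists a unique B > 0 satisfying the equation ( (B N₀/(M P β))·K + K )·ln(1 + M P β/(B N₀)) = MκνB + K. -/
/-! Substituting `x = MPβ / (BN₀)` (the SNR) and multiplying by `x / K` turns
the equation into `(1 + x) log (1 + x) - x = MκνMPβ / (N₀K)`. The left side vanishes at `x = 0`,
has derivative `log (1 + x) > 0` for `x > 0` and is unbounded, so it takes every positive value at
exactly one positive `x`; and `B ↦ MPβ / (BN₀)` is a bijection of the positive reals. -/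

open Real Set

lemma hasDerivAt_one_add_mul_log_one_add_sub {x : ℝ} (hx : -1 < x) :
    HasDerivAt (fun t : ℝ => (1 + t) * log (1 + t) - t) (log (1 + x)) x := by
  have h1 : HasDerivAt (fun t : ℝ => 1 + t) 1 x := (hasDerivAt_id x).const_add 1
  have hpos : 1 + x ≠ 0 := by linarith
  refine ((h1.mul (h1.log hpos)).sub (hasDerivAt_id' x)).congr_deriv ?_
  field_simp
  ring

lemma strictMonoOn_one_add_mul_log_one_add_sub :
    StrictMonoOn (fun t : ℝ => (1 + t) * log (1 + t) - t) (Ici 0) := by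
  refine strictMonoOn_of_deriv_pos (convex_Ici 0) (fun x hx => ?_) (fun x hx => ?_)
  · exact (hasDerivAt_one_add_mul_log_one_add_sub
      (by linarith [mem_Ici.mp hx])).continuousAt.continuousWithinAt
  · rw [interior_Ici, mem_Ioi] at hx
    rw [(hasDerivAt_one_add_mul_log_one_add_sub (by linarith)).deriv]
    exact log_pos (by linarith)

lemma existsUnique_pos_one_add_mul_log_one_add_sub_eq {c : ℝ} (hc : 0 < c) :
    ∃! x : ℝ, 0 < x ∧ (1 + x) * log (1 + x) - x = c := by
  set g : ℝ → ℝ := fun t => (1 + t) * log (1 + t) - t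
  have hg0 : g 0 = 0 := by simp [g]
  -- At `R = exp (c + 1) - 1` we have `log (1 + R) = c + 1`, hence `g R = c · exp (c + 1) + 1`.
  set R := exp (c + 1) - 1
  have hR : 0 ≤ R := by linarith [add_one_le_exp (c + 1)]
  have hgR : c ≤ g R := by
    have : g R = c * exp (c + 1) + 1 := by simp only [g, R, add_sub_cancel, log_exp]; ring
    nlinarith [add_one_le_exp (c + 1)]
  have hcont : ContinuousOn g (Icc 0 R) := fun x hx =>
    (hasDerivAt_one_add_mul_log_one_add_sub
      (by linarith [hx.1])).continuousAt.continuousWithinAt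
  obtain ⟨x, hxI, hgx⟩ := intermediate_value_Icc hR hcont ⟨by rw [hg0]; exact hc.le, hgR⟩
  have hx : 0 < x := hxI.1.lt_of_ne (by rintro rfl; linarith)
  refine ⟨x, ⟨hx, hgx⟩, fun y ⟨hy, hgy⟩ => ?_⟩
  exact strictMonoOn_one_add_mul_log_one_add_sub.injOn (mem_Ici.mpr hy.le)
    (mem_Ici.mpr hx.le) (hgy.trans hgx.symm)

lemma optimality_condition_iff {s n K a B : ℝ} (hs : 0 < s) (hn : 0 < n) (hK : 0 < K)
    (hB : 0 < B) :
    ((B * n / s) * K + K) * log (1 + s / (B * n)) = a * B + K ↔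
      (1 + s / (B * n)) * log (1 + s / (B * n)) - s / (B * n) = a * s / (n * K) := by
  set x := s / (B * n)
  have hx : 0 < x := by positivity
  have hfactor : ((B * n / s) * K + K) * log (1 + x) - (a * B + K) =
      K / x * ((1 + x) * log (1 + x) - x - a * s / (n * K)) := by
    simp only [x]
    field_simp
    ring
  rw [← sub_eq_zero, hfactor, mul_eq_zero, sub_eq_zero]
  simp [hK.ne', hx.ne']

/-- Equation (21) of the paper: the first-order optimality condition in the bandwidth `B`
has a unique positive solution. Here `K = κμ + D₀Mκ + P`. -/
theorem stmt_7 (β N₀ κ P M ν μ D₀ K : ℝ)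
    (hβ : 0 < β) (hN : 0 < N₀) (hκ : 0 < κ) (hP : 0 < P) (hM : 0 < M) (hν : 0 < ν)
    (hμ : 0 ≤ μ) (hD : 0 ≤ D₀) (hK : K = κ * μ + D₀ * M * κ + P) :
    ∃! B : ℝ, 0 < B ∧
      ((B * N₀ / (M * P * β)) * K + K) * Real.log (1 + M * P * β / (B * N₀)) =
        M * κ * ν * B + K := by
  have hK0 : 0 < K := by rw [hK]; positivity
  have hs : 0 < M * P * β := by positivity
  obtain ⟨x, ⟨hx, hgx⟩, hunique⟩ := existsUnique_pos_one_add_mul_log_one_add_sub_eq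
    (c := M * κ * ν * (M * P * β) / (N₀ * K)) (by positivity)
  have hsnr : ∀ y, 0 < y → M * P * β / (M * P * β / (y * N₀) * N₀) = y := fun y hy => by
    field_simp
  refine ⟨M * P * β / (x * N₀), ⟨by positivity, ?_⟩, fun B ⟨hB, hEq⟩ => ?_⟩
  · rw [optimality_condition_iff hs hN hK0 (by positivity), hsnr x hx]
    exact hgx
  · rw [optimality_condition_iff hs hN hK0 hB] at hEq
    rw [← hunique _ ⟨by positivity, hEq⟩]
    field_simp
end

section
/- Let N₀, M, P, β > 0 and K > 0 be real numbers. The function B ↦ ( (B N₀/(M P β))·K + K )·ln(1 + M P β/(B N₀)) is strictly decreasing on (0, ∞), its limit as B → 0⁺ is +∞, and its limit as B → ∞ is K. -/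
/-!
With `t = B N₀ / (M P β)` the function is `K · g t` for `g t = (t + 1) log (1 + 1/t)`, so everything
reduces to three facts about `g`. Its derivative is `log (1 + 1/t) - 1/t`, negative because
`log (1 + x) < x` for `x > 0`. Near `0` the logarithm blows up while `t + 1 ≥ 1`, and at infinity
`t log (1 + 1/t) → 1` while `log (1 + 1/t) → 0`.
-/

open Filter Real Set Topology

lemma hasDerivAt_add_one_mul_log_one_add_inv {t : ℝ} (ht : 0 < t) :
    HasDerivAt (fun t : ℝ => (t + 1) * log (1 + t⁻¹)) (log (1 + t⁻¹) - t⁻¹) t := by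
  have hlog : HasDerivAt (fun t : ℝ => log (1 + t⁻¹)) (-(t ^ 2)⁻¹ / (1 + t⁻¹)) t :=
    ((hasDerivAt_inv ht.ne').const_add 1).log (by positivity)
  refine (((hasDerivAt_id' t).add_const 1).mul hlog).congr_deriv ?_
  field_simp
  ring

lemma strictAntiOn_add_one_mul_log_one_add_inv :
    StrictAntiOn (fun t : ℝ => (t + 1) * log (1 + t⁻¹)) (Ioi 0) := by
  refine strictAntiOn_of_hasDerivWithinAt_neg (convex_Ioi 0)
    (fun t ht => (hasDerivAt_add_one_mul_log_one_add_inv ht).continuousAt.continuousWithinAt)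
    (fun t ht => (hasDerivAt_add_one_mul_log_one_add_inv (interior_subset ht)).hasDerivWithinAt) ?_
  rw [interior_Ioi]
  intro t (ht : 0 < t)
  have hinv : 0 < t⁻¹ := inv_pos.mpr ht
  have : log (1 + t⁻¹) < 1 + t⁻¹ - 1 := log_lt_sub_one_of_pos (by positivity) (by linarith)
  linarith

lemma tendsto_add_one_mul_log_one_add_inv_nhdsGT_zero :
    Tendsto (fun t : ℝ => (t + 1) * log (1 + t⁻¹)) (𝓝[>] 0) atTop := by
  have hlog : Tendsto (fun t : ℝ => log (1 + t⁻¹)) (𝓝[>] 0) atTop :=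
    tendsto_log_atTop.comp (tendsto_atTop_add_const_left _ 1 tendsto_inv_nhdsGT_zero)
  refine tendsto_atTop_mono' _ ?_ hlog
  filter_upwards [self_mem_nhdsWithin] with t (ht : 0 < t)
  have hlog_nonneg : 0 ≤ log (1 + t⁻¹) := log_nonneg (by linarith [inv_pos.mpr ht])
  exact le_mul_of_one_le_left hlog_nonneg (by linarith)

lemma tendsto_add_one_mul_log_one_add_inv_atTop :
    Tendsto (fun t : ℝ => (t + 1) * log (1 + t⁻¹)) atTop (𝓝 1) := by
  have hmul : Tendsto (fun t : ℝ => t * log (1 + t⁻¹)) atTop (𝓝 1) := by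
    simpa [one_div] using tendsto_mul_log_one_add_div_atTop 1
  have hlog : Tendsto (fun t : ℝ => log (1 + t⁻¹)) atTop (𝓝 0) := by
    have h : Tendsto (fun t : ℝ => 1 + t⁻¹) atTop (𝓝 1) := by
      simpa using tendsto_inv_atTop_zero.const_add (1 : ℝ)
    simpa only [log_one, Function.comp_def] using (continuousAt_log one_ne_zero).tendsto.comp h
  simpa [add_mul] using hmul.add hlog

/-- The key monotonicity claim in the proof of Lemma 2 of the paper: the left-hand side of
the bandwidth optimality equation is strictly decreasing on `(0, ∞)`, tends to `+∞` as
`B → 0⁺`, and tends to `K` as `B → ∞`. -/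
theorem stmt_9 (N₀ M P β K : ℝ)
    (hN : 0 < N₀) (hM : 0 < M) (hP : 0 < P) (hβ : 0 < β) (hK : 0 < K) :
    StrictAntiOn
      (fun B : ℝ =>
        ((B * N₀ / (M * P * β)) * K + K) * Real.log (1 + M * P * β / (B * N₀)))
      (Set.Ioi (0 : ℝ)) ∧
    Filter.Tendsto
      (fun B : ℝ =>
        ((B * N₀ / (M * P * β)) * K + K) * Real.log (1 + M * P * β / (B * N₀)))
      (nhdsWithin 0 (Set.Ioi 0)) Filter.atTop ∧
    Filter.Tendsto
      (fun B : ℝ =>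
        ((B * N₀ / (M * P * β)) * K + K) * Real.log (1 + M * P * β / (B * N₀)))
      Filter.atTop (nhds K) := by
  set a := N₀ / (M * P * β)
  have ha : 0 < a := by positivity
  have hf : (fun B : ℝ =>
      ((B * N₀ / (M * P * β)) * K + K) * Real.log (1 + M * P * β / (B * N₀))) =
      fun B => K * ((a * B + 1) * log (1 + (a * B)⁻¹)) := by
    funext B
    rw [mul_comm a, mul_div_assoc, ← inv_div (B * N₀), mul_div_assoc]
    ring
  rw [hf]
  refine ⟨fun x hx y hy hxy => ?_, ?_, ?_⟩
  · exact mul_lt_mul_of_pos_left (strictAntiOn_add_one_mul_log_one_add_inv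
      (mul_pos ha hx) (mul_pos ha hy) (by gcongr)) hK
  · have hscale : Tendsto (a * ·) (𝓝[>] 0) (𝓝[>] 0) := by
      simpa only [comap_mulLeft_nhdsGT_zero ha] using tendsto_comap (f := (a * ·)) (x := 𝓝[>] 0)
    exact (tendsto_add_one_mul_log_one_add_inv_nhdsGT_zero.comp hscale).const_mul_atTop hK
  · simpa using (tendsto_add_one_mul_log_one_add_inv_atTop.comp
      (tendsto_id.const_mul_atTop ha)).const_mul K
end
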